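/- arXiv:1106.2342 — 4 statements merged into one kernel-verified Lean document; each statement's English description precedes it below -/
import Mathlib

section
/- If X has a multivariate ℓ1-norm symmetric distribution with generating law ν, i.e., X = R·U in law with R ≥ 0 with law ν and U uniform on the simplex, independent of R, then for x ≥ 0 the marginal survival function of each coordinate is F̄(x) = ∫_x^∞ (1 - x/r)^{n-1} ν(dr). -/
/-!
Write `U = E / ∑ E` with `E` i.i.d. exponential. For `0 ≤ t < 1` the event `t < U i` is
`c · S < E i` with `c = t / (1 - t)` and `S` the sum of the other `n - 1` coordinates.
Integrating the exponential tail `P(E i > c S | S) = exp (-c S)` gives the Laplace transform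
`E[exp (-c S)] = (1 + c) ^ (-(n - 1)) = (1 - t) ^ (n - 1)`. Since `U i ≤ 1`, independence of
`R` and `U` turns `P(x < R · U i)` into `∫ P(x / r < U i) ν(dr)` over `r > x`.
-/

open MeasureTheory ProbabilityTheory Real Set

lemma lintegral_fintype_prod_eq_pow {ι E : Type*} [Fintype ι] [MeasurableSpace E]
    {μ : Measure E} [IsProbabilityMeasure μ] {f : E → ENNReal} (hf : Measurable f) :
    ∫⁻ x : ι → E, ∏ i, f (x i) ∂Measure.pi (fun _ => μ)
      = (∫⁻ y, f y ∂μ) ^ Fintype.card ι := by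
  refine (lintegral_prod_eq_prod_lintegral_of_indepFun Finset.univ
    (fun i (x : ι → E) => f (x i)) (iIndepFun_pi fun _ => hf.aemeasurable)
    fun i => hf.comp (measurable_pi_apply i)).trans ?_
  simp_rw [(measurePreserving_eval (fun _ : ι => μ) _).lintegral_comp hf]
  rw [Finset.prod_const, Finset.card_univ]

section ExponentialDistribution

variable {r : ℝ}

lemma expMeasure_eq_withDensity (r : ℝ) :
    expMeasure r = volume.withDensity (exponentialPDF r) := rfl

lemma expMeasure_Ioi (hr : 0 < r) {c : ℝ} (hc : 0 ≤ c) :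
    expMeasure r (Ioi c) = ENNReal.ofReal (exp (-(r * c))) := by
  have := isProbabilityMeasure_expMeasure hr
  have hle : exp (-(r * c)) ≤ 1 := exp_le_one_iff.2 (by nlinarith)
  rw [← compl_Iic, prob_compl_eq_one_sub measurableSet_Iic, ← ofReal_cdf, cdf_expMeasure_eq hr,
    if_pos hc, ← ENNReal.ofReal_one, ← ENNReal.ofReal_sub _ (by linarith), sub_sub_cancel]

lemma ae_pos_expMeasure (r : ℝ) : ∀ᵐ y ∂expMeasure r, 0 < y := by
  have h : expMeasure r (Iic 0) = 0 := by
    rw [expMeasure_eq_withDensity, withDensity_apply _ measurableSet_Iic,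
      ← restrict_Iio_eq_restrict_Iic]
    exact lintegral_exponentialPDF_of_nonpos le_rfl
  rw [ae_iff]
  simp only [not_lt]
  exact h

lemma lintegral_exp_neg_mul_expMeasure (hr : 0 ≤ r) {c : ℝ} (hrc : 0 < r + c) :
    ∫⁻ y, ENNReal.ofReal (exp (-(c * y))) ∂expMeasure r = ENNReal.ofReal (r / (r + c)) := by
  have hdensity : ∀ y, exponentialPDF r y * ENNReal.ofReal (exp (-(c * y)))
      = (Ici 0).indicator (fun y => ENNReal.ofReal (r * exp (-(r + c) * y))) y := by
    intro y
    rcases lt_or_ge y 0 with hy | hy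
    · simp [exponentialPDF_of_neg hy, hy]
    · rw [indicator_of_mem (mem_Ici.2 hy), exponentialPDF_of_nonneg hy,
        ← ENNReal.ofReal_mul (by positivity), mul_assoc, ← exp_add]
      ring_nf
  rw [expMeasure_eq_withDensity, lintegral_withDensity_eq_lintegral_mul _
    (show Measurable (exponentialPDF r) from (measurable_exponentialPDFReal r).ennreal_ofReal)
    (by fun_prop)]
  simp only [Pi.mul_apply, hdensity]
  rw [lintegral_indicator measurableSet_Ici, setLIntegral_congr Ioi_ae_eq_Ici.symm,
    ← ofReal_integral_eq_lintegral_ofReal, integral_const_mul,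
    integral_exp_mul_Ioi (by linarith)]
  · congr 1
    field_simp
    simp
  · exact (integrableOn_exp_mul_Ioi (by linarith) 0).const_mul r
  · exact Filter.Eventually.of_forall fun y => by positivity

lemma ae_pos_pi_expMeasure {ι : Type*} [Fintype ι] (hr : 0 < r) :
    ∀ᵐ e ∂Measure.pi (fun _ : ι => expMeasure r), ∀ j, 0 < e j := by
  have := isProbabilityMeasure_expMeasure hr
  exact ae_all_iff.2 fun j => (Measure.quasiMeasurePreserving_eval _ j).ae (ae_pos_expMeasure r)

lemma lintegral_exp_neg_mul_sum_pi_expMeasure {ι : Type*} [Fintype ι] (hr : 0 < r) {c : ℝ}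
    (hrc : 0 < r + c) :
    ∫⁻ e : ι → ℝ, ENNReal.ofReal (exp (-(c * ∑ j, e j)))
        ∂Measure.pi (fun _ => expMeasure r)
      = ENNReal.ofReal (r / (r + c)) ^ Fintype.card ι := by
  have := isProbabilityMeasure_expMeasure hr
  have hprod : ∀ e : ι → ℝ,
      ENNReal.ofReal (exp (-(c * ∑ j, e j))) = ∏ j, ENNReal.ofReal (exp (-(c * e j))) := by
    intro e
    rw [← ENNReal.ofReal_prod_of_nonneg fun j _ => (exp_pos _).le, ← exp_sum, Finset.mul_sum,
      Finset.sum_neg_distrib]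
  simp_rw [hprod]
  rw [lintegral_fintype_prod_eq_pow (f := fun y => ENNReal.ofReal (exp (-(c * y)))) (by fun_prop),
    lintegral_exp_neg_mul_expMeasure hr.le hrc]

lemma pi_expMeasure_mul_sum_lt_coord (hr : 0 < r) (m : ℕ) (i : Fin (m + 1)) {t : ℝ}
    (ht0 : 0 ≤ t) (ht1 : t < 1) :
    Measure.pi (fun _ : Fin (m + 1) => expMeasure r) {e | t * ∑ j, e j < e i}
      = ENNReal.ofReal ((1 - t) ^ m) := by
  have := isProbabilityMeasure_expMeasure hr
  have h1t : 0 < 1 - t := by linarith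
  set c := t / (1 - t) with hc_def
  have hc : 0 ≤ c := by positivity
  have hA : MeasurableSet {p : ℝ × (Fin m → ℝ) | c * ∑ j, p.2 j < p.1} :=
    measurableSet_lt (by fun_prop) (by fun_prop)
  have hpre : {e : Fin (m + 1) → ℝ | t * ∑ j, e j < e i}
      = MeasurableEquiv.piFinSuccAbove (fun _ => ℝ) i ⁻¹' {p | c * ∑ j, p.2 j < p.1} := by
    ext e
    simp only [mem_ofPred_eq, mem_preimage, MeasurableEquiv.piFinSuccAbove_apply,
      Fin.insertNthEquiv_symm_apply, Fin.removeNth, Fin.sum_univ_succAbove _ i]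
    rw [hc_def, div_mul_eq_mul_div, div_lt_iff₀ h1t]
    constructor <;> intro h <;> linarith
  rw [hpre, (measurePreserving_piFinSuccAbove _ i).measure_preimage hA.nullMeasurableSet,
    Measure.prod_apply_symm hA]
  calc ∫⁻ s, expMeasure r (Ioi (c * ∑ j, s j)) ∂Measure.pi (fun _ : Fin m => expMeasure r)
      = ∫⁻ s, ENNReal.ofReal (exp (-(r * c * ∑ j, s j)))
          ∂Measure.pi (fun _ : Fin m => expMeasure r) := by
        refine lintegral_congr_ae ?_
        filter_upwards [ae_pos_pi_expMeasure hr] with s hs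
        rw [expMeasure_Ioi hr (mul_nonneg hc (Finset.sum_nonneg fun j _ => (hs j).le)), mul_assoc]
    _ = ENNReal.ofReal (r / (r + r * c)) ^ m := by
        rw [lintegral_exp_neg_mul_sum_pi_expMeasure hr (by positivity), Fintype.card_fin]
    _ = ENNReal.ofReal ((1 - t) ^ m) := by
        rw [ENNReal.ofReal_pow h1t.le, hc_def]
        congr 2
        field_simp
        ring

lemma pi_expMeasure_lt_mul_coord_div_sum (hr : 0 < r) (m : ℕ) (i : Fin (m + 1)) {x s : ℝ}
    (hx : 0 ≤ x) (hs : 0 ≤ s) :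
    Measure.pi (fun _ : Fin (m + 1) => expMeasure r) {e | x < s * (e i / ∑ j, e j)}
      = (Ioi x).indicator (fun s => ENNReal.ofReal ((1 - x / s) ^ m)) s := by
  have hsum : ∀ᵐ e ∂Measure.pi (fun _ : Fin (m + 1) => expMeasure r),
      0 < ∑ j, e j ∧ e i ≤ ∑ j, e j := by
    filter_upwards [ae_pos_pi_expMeasure hr] with e he
    exact ⟨Finset.sum_pos (fun j _ => he j) Finset.univ_nonempty,
      Finset.single_le_sum (fun j _ => (he j).le) (Finset.mem_univ i)⟩
  rcases le_or_gt s x with hsx | hxs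
  · rw [indicator_of_notMem (notMem_Ioi.2 hsx), measure_eq_zero_iff_ae_notMem]
    filter_upwards [hsum] with e ⟨hS, hle⟩
    have hq : e i / ∑ j, e j ≤ 1 := (div_le_one hS).2 hle
    exact not_lt.2 ((mul_le_of_le_one_right hs hq).trans hsx)
  · have hs0 : 0 < s := hx.trans_lt hxs
    rw [indicator_of_mem (mem_Ioi.2 hxs), ← pi_expMeasure_mul_sum_lt_coord hr m i
      (div_nonneg hx hs) ((div_lt_one hs0).2 hxs)]
    refine measure_congr (Filter.eventuallyEq_set.2 ?_)
    filter_upwards [hsum] with e ⟨hS, _⟩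
    rw [mul_div_assoc', lt_div_iff₀ hS, div_mul_eq_mul_div, div_lt_iff₀ hs0, mul_comm (e i)]

end ExponentialDistribution

theorem asp_l1_symmetric_marginal_survival_general
    {Ω : Type*} [MeasurableSpace Ω] (μ : Measure Ω) [IsProbabilityMeasure μ]
    (n : ℕ) (ν : Measure ℝ) [IsProbabilityMeasure ν]
    (R : Ω → ℝ) (U : Ω → Fin n → ℝ)
    (hR : Measure.map R μ = ν) (hRnn : ∀ᵐ ω ∂μ, 0 ≤ R ω)
    (hU : Measure.map U μ =
      Measure.map (fun e (i : Fin n) => e i / ∑ j, e j)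
        (Measure.pi fun _ : Fin n => expMeasure 1))
    (hindep : IndepFun R U μ) :
    ∀ x : ℝ, 0 ≤ x → ∀ i : Fin n,
      μ {ω | x < R ω * U ω i}
        = ∫⁻ r in Set.Ioi x, ENNReal.ofReal ((1 - x / r) ^ (n - 1)) ∂ν := by
  intro x hx i
  obtain ⟨m, rfl⟩ : ∃ m, n = m + 1 := ⟨n - 1, by have := i.pos; omega⟩
  set P := Measure.pi fun _ : Fin (m + 1) => expMeasure 1
  have := isProbabilityMeasure_expMeasure one_pos
  have hRlaw : HasLaw R ν μ := ⟨.of_map_ne_zero (hR ▸ IsProbabilityMeasure.ne_zero ν), hR⟩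
  have hUlaw : HasLaw U (P.map fun e i => e i / ∑ j, e j) μ :=
    ⟨.of_map_ne_zero (hU ▸ (Measure.isProbabilityMeasure_map (by fun_prop)).ne_zero), hU⟩
  have hcoord : HasLaw (fun u => u i) (P.map fun e => e i / ∑ j, e j)
      (P.map fun e i => e i / ∑ j, e j) :=
    ⟨(measurable_pi_apply i).aemeasurable, by
      rw [Measure.map_map (by fun_prop) (by fun_prop)]; rfl⟩
  have hUilaw : HasLaw (fun ω => U ω i) (P.map fun e => e i / ∑ j, e j) μ :=
    hcoord.fun_comp hUlaw
  have hjoint := (hindep.comp measurable_id (measurable_pi_apply i)).hasLaw_prod hRlaw hUilaw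
  have hset : MeasurableSet {p : ℝ × ℝ | x < p.1 * p.2} :=
    measurableSet_lt (by fun_prop) (by fun_prop)
  have hν : ∀ᵐ s ∂ν, 0 ≤ s := (hRlaw.ae_iff (measurableSet_Ici (a := 0)).mem).1 hRnn
  calc μ {ω | x < R ω * U ω i}
      = ∫⁻ s, P {e | x < s * (e i / ∑ j, e j)} ∂ν := by
        rw [hjoint.measure_eq (p := fun p => x < p.1 * p.2) hset, Measure.prod_apply hset]
        exact lintegral_congr fun s =>
          Measure.map_apply (by fun_prop) (measurable_prodMk_left hset)
    _ = ∫⁻ s, (Ioi x).indicator (fun s => ENNReal.ofReal ((1 - x / s) ^ m)) s ∂ν :=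
        lintegral_congr_ae <| hν.mono fun s hs =>
          pi_expMeasure_lt_mul_coord_div_sum one_pos m i hx hs
    _ = _ := by rw [lintegral_indicator measurableSet_Ioi, Nat.add_sub_cancel]

/-- If `X = R · U` with `R ≥ 0` of law `ν` independent of `U`, which is uniformly
distributed on the unit simplex (i.e. `U = E/‖E‖` for i.i.d. exponential `E`), then the
marginal survival function of each coordinate is `F̄(x) = ∫_x^∞ (1 - x/r)^(n-1) ν(dr)`. -/
theorem asp_l1_symmetric_marginal_survival
    {Ω : Type*} [MeasurableSpace Ω] (μ : Measure Ω) [IsProbabilityMeasure μ]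
    (n : ℕ) (hn : 2 ≤ n) (ν : Measure ℝ) [IsProbabilityMeasure ν]
    (R : Ω → ℝ) (U : Ω → Fin n → ℝ)
    (hR : Measure.map R μ = ν) (hRnn : ∀ᵐ ω ∂μ, 0 ≤ R ω)
    (hU : Measure.map U μ =
      Measure.map (fun e (i : Fin n) => e i / ∑ j, e j)
        (Measure.pi fun _ : Fin n => expMeasure 1))
    (hindep : IndepFun R U μ) :
    ∀ x : ℝ, 0 ≤ x → ∀ i : Fin n,
      μ {ω | x < R ω * U ω i}
        = ∫⁻ r in Set.Ioi x, ENNReal.ofReal ((1 - x / r) ^ (n - 1)) ∂ν :=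
  asp_l1_symmetric_marginal_survival_general μ n ν R U hR hRnn hU hindep
end

section
/- Let γ be a gamma process with density f_t(x) = x^{mt-1}e^{-x}/Γ(mt) at time t. The gamma bridge γ_{·,T} (γ conditioned on γ_T = 1) has transition law P[γ_{tT} ∈ dy | γ_{sT} = x] = 1_{x<y<1} ((y-x)/(1-x))^{m(t-s)-1} ((1-y)/(1-x))^{m(T-t)-1} / ((1-x) B(m(t-s), m(T-t))) dy for 0 ≤ s < t ≤ T; equivalently, (γ_{tT} - γ_{sT})/(1 - γ_{sT}) given γ_{sT} = x has a Beta(m(t-s), m(T-t)) distribution. -/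
/-! In the ratio `f_a(u) f_b(v) / f_{a+b}(u + v)` the exponentials cancel, since
`e^{-u} e^{-v} = e^{-(u+v)}`, and `(u + v)^{a+b-1}` splits as `(u + v)^{a-1} (u + v)^{b-1} (u + v)`;
what remains is the Beta(a, b) density at `u / (u + v)` divided by `u + v`. With `u = y - x` and
`v = 1 - y` this is `(1 - x)⁻¹` times the Beta density at `(y - x)/(1 - x)`, and the affine change
of variables `y ↦ (y - x)/(1 - x)` absorbs exactly that Jacobian factor. -/

open MeasureTheory

noncomputable section

/-- The Gamma(t, 1) density. -/
def gammaDens (t x : ℝ) : ℝ :=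
  if 0 < x then x ^ (t - 1) * Real.exp (-x) / Real.Gamma t else 0

/-- The Beta function `B(a,b) = Γ(a)Γ(b)/Γ(a+b)`. -/
def betaB (a b : ℝ) : ℝ := Real.Gamma a * Real.Gamma b / Real.Gamma (a + b)

open ProbabilityTheory

lemma gammaDens_mul_gammaDens_div_gammaDens_add {a b u v : ℝ} (ha : 0 < a) (hb : 0 < b)
    (hu : 0 < u) (hv : 0 < v) :
    gammaDens a u * gammaDens b v / gammaDens (a + b) (u + v)
      = (u / (u + v)) ^ (a - 1) * (v / (u + v)) ^ (b - 1) / ((u + v) * betaB a b) := by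
  have hw : 0 < u + v := add_pos hu hv
  have hpow : (u + v) ^ (a + b - 1) = (u + v) ^ (a - 1) * (u + v) ^ (b - 1) * (u + v) := by
    rw [show a + b - 1 = (a - 1) + ((b - 1) + 1) by ring, Real.rpow_add hw, Real.rpow_add hw,
      Real.rpow_one, mul_assoc]
  have hexp : Real.exp (-(u + v)) = Real.exp (-u) * Real.exp (-v) := by
    rw [← Real.exp_add, neg_add]
  have := Real.Gamma_pos_of_pos ha
  have := Real.Gamma_pos_of_pos hb
  have := Real.Gamma_pos_of_pos (add_pos ha hb)
  have := Real.rpow_pos_of_pos hw (a - 1)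
  have := Real.rpow_pos_of_pos hw (b - 1)
  simp only [gammaDens, betaB, if_pos hu, if_pos hv, if_pos hw]
  rw [Real.div_rpow hu.le hw.le, Real.div_rpow hv.le hw.le, hpow, hexp]
  field_simp

lemma betaPDFReal_eq_ite_betaB (a b z : ℝ) :
    betaPDFReal a b z
      = if 0 < z ∧ z < 1 then z ^ (a - 1) * (1 - z) ^ (b - 1) / betaB a b else 0 := by
  simp only [betaPDFReal, betaB, beta]
  split_ifs <;> ring

lemma gammaBridgeDens_eq {a b x : ℝ} (ha : 0 < a) (hb : 0 < b) (hx : x < 1) (y : ℝ) :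
    (if x < y ∧ y < 1 then
        gammaDens a (y - x) * gammaDens b (1 - y) / gammaDens (a + b) (1 - x) else 0)
      = (1 - x)⁻¹ * betaPDFReal a b ((y - x) / (1 - x)) := by
  have hc : 0 < 1 - x := sub_pos.2 hx
  have hsupp : (0 < (y - x) / (1 - x) ∧ (y - x) / (1 - x) < 1) ↔ (x < y ∧ y < 1) := by
    rw [div_pos_iff_of_pos_right hc, div_lt_one hc, sub_pos, sub_lt_sub_iff_right]
  rw [betaPDFReal_eq_ite_betaB]
  by_cases h : x < y ∧ y < 1
  · rw [if_pos h, if_pos (hsupp.2 h)]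
    obtain ⟨hxy, hy1⟩ := h
    have hsum : (y - x) + (1 - y) = 1 - x := by ring
    have hcompl : 1 - (y - x) / (1 - x) = (1 - y) / (1 - x) := by field_simp; ring
    rw [← hsum, gammaDens_mul_gammaDens_div_gammaDens_add ha hb (sub_pos.2 hxy) (sub_pos.2 hy1),
      hsum, hcompl]
    field_simp
  · rw [if_neg h, if_neg (mt hsupp.1 h), mul_zero]

lemma MeasurableEquiv.map_withDensity_comp {α β : Type*} [MeasurableSpace α] [MeasurableSpace β]
    (e : α ≃ᵐ β) (μ : Measure α) (g : β → ENNReal) :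
    (μ.withDensity (g ∘ e)).map e = (μ.map e).withDensity g := by
  ext s hs
  rw [Measure.map_apply e.measurable hs, withDensity_apply _ hs,
    withDensity_apply _ (e.measurable hs), Measure.restrict_map e.measurable hs,
    lintegral_map_equiv]
  rfl

lemma map_sub_div_withDensity {c : ℝ} (hc : 0 < c) (x : ℝ) (g : ℝ → ENNReal) :
    (volume.withDensity fun y => ENNReal.ofReal c⁻¹ * g ((y - x) / c)).map (fun y => (y - x) / c)
      = volume.withDensity g := by
  let e : ℝ ≃ᵐ ℝ := (Homeomorph.addRight (-x)).toMeasurableEquiv.trans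
    (Homeomorph.mulLeft₀ c⁻¹ (inv_ne_zero hc.ne')).toMeasurableEquiv
  have he : (fun y => (y - x) / c) = e := by
    funext y
    exact (div_eq_inv_mul _ _).trans (congrArg _ (sub_eq_add_neg _ _))
  have hvol : volume.map e = ENNReal.ofReal c • volume := by
    rw [← he, show (fun y : ℝ => (y - x) / c) = (fun y => c⁻¹ * y) ∘ (· + -x) by
        funext y; rw [Function.comp_apply, ← sub_eq_add_neg, div_eq_inv_mul],
      ← Measure.map_map (measurable_const_mul _) (measurable_add_const _),
      map_add_right_eq_self, Real.map_volume_mul_left (inv_ne_zero hc.ne'), inv_inv,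
      abs_of_pos hc]
  have hsmul : (volume.withDensity fun y => ENNReal.ofReal c⁻¹ * g ((y - x) / c))
      = ENNReal.ofReal c⁻¹ • volume.withDensity (g ∘ e) := by
    rw [← withDensity_smul' _ _ ENNReal.ofReal_ne_top, ← he]
    rfl
  rw [hsmul, he, Measure.map_smul, e.map_withDensity_comp, hvol, withDensity_smul_measure,
    smul_smul, ← ENNReal.ofReal_mul (inv_nonneg.2 hc.le), inv_mul_cancel₀ hc.ne',
    ENNReal.ofReal_one, one_smul]

theorem asp_gamma_bridge_transition_general (m s t T x : ℝ) (hm : 0 < m)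
    (hst : s < t) (htT : t < T) (hx1 : x < 1) :
    (∀ y : ℝ, x < y → y < 1 →
      gammaDens (m * (t - s)) (y - x) * gammaDens (m * (T - t)) (1 - y)
          / gammaDens (m * (T - s)) (1 - x)
        = ((y - x) / (1 - x)) ^ (m * (t - s) - 1)
            * ((1 - y) / (1 - x)) ^ (m * (T - t) - 1)
            / ((1 - x) * betaB (m * (t - s)) (m * (T - t)))) ∧
    (Measure.map (fun y => (y - x) / (1 - x))
        (volume.withDensity fun y =>
          ENNReal.ofReal (if x < y ∧ y < 1 then
            gammaDens (m * (t - s)) (y - x) * gammaDens (m * (T - t)) (1 - y)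
              / gammaDens (m * (T - s)) (1 - x) else 0))
      = volume.withDensity fun z =>
          ENNReal.ofReal (if 0 < z ∧ z < 1 then
            z ^ (m * (t - s) - 1) * (1 - z) ^ (m * (T - t) - 1)
              / betaB (m * (t - s)) (m * (T - t)) else 0)) := by
  have ha : 0 < m * (t - s) := mul_pos hm (sub_pos.2 hst)
  have hb : 0 < m * (T - t) := mul_pos hm (sub_pos.2 htT)
  have hc : 0 < 1 - x := sub_pos.2 hx1
  rw [show m * (T - s) = m * (t - s) + m * (T - t) by ring]
  refine ⟨fun y hxy hy1 => ?_, ?_⟩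
  · have hsum : (y - x) + (1 - y) = 1 - x := by ring
    rw [← hsum]
    exact gammaDens_mul_gammaDens_div_gammaDens_add ha hb (sub_pos.2 hxy) (sub_pos.2 hy1)
  · simp_rw [gammaBridgeDens_eq ha hb hx1, ENNReal.ofReal_mul (inv_nonneg.2 hc.le),
      ← betaPDFReal_eq_ite_betaB]
    exact map_sub_div_withDensity hc x (betaPDF _ _)

/-- Transition law of the gamma bridge: the conditional density
`f_{t-s}(y-x) f_{T-t}(1-y)/f_{T-s}(1-x)` equals
`((y-x)/(1-x))^{m(t-s)-1}((1-y)/(1-x))^{m(T-t)-1}/((1-x)B(m(t-s),m(T-t)))` for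
`x < y < 1`; equivalently, `(γ_{tT}-x)/(1-x)` given `γ_{sT} = x` has a
Beta(m(t-s), m(T-t)) distribution. -/
theorem asp_gamma_bridge_transition (m s t T x : ℝ) (hm : 0 < m)
    (hs : 0 ≤ s) (hst : s < t) (htT : t < T) (hx0 : 0 ≤ x) (hx1 : x < 1) :
    (∀ y : ℝ, x < y → y < 1 →
      gammaDens (m * (t - s)) (y - x) * gammaDens (m * (T - t)) (1 - y)
          / gammaDens (m * (T - s)) (1 - x)
        = ((y - x) / (1 - x)) ^ (m * (t - s) - 1)
            * ((1 - y) / (1 - x)) ^ (m * (T - t) - 1)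
            / ((1 - x) * betaB (m * (t - s)) (m * (T - t)))) ∧
    (Measure.map (fun y => (y - x) / (1 - x))
        (volume.withDensity fun y =>
          ENNReal.ofReal (if x < y ∧ y < 1 then
            gammaDens (m * (t - s)) (y - x) * gammaDens (m * (T - t)) (1 - y)
              / gammaDens (m * (T - s)) (1 - x) else 0))
      = volume.withDensity fun z =>
          ENNReal.ofReal (if 0 < z ∧ z < 1 then
            z ^ (m * (t - s) - 1) * (1 - z) ^ (m * (T - t) - 1)
              / betaB (m * (t - s)) (m * (T - t)) else 0)) :=
  asp_gamma_bridge_transition_general m s t T x hm hst htT hx1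

end
end

section
/- Let Γ_t = R γ_{tT} where R > 0 has law ν and γ_{·,T} is an independent gamma bridge with activity m. Then for 0 ≤ s < T, P[Γ_T ∈ dy | Γ_s = x] = 1_{y>x} (y-x)^{m(T-s)-1} y^{1-mT} ν(dy) / ∫_x^∞ (z-x)^{m(T-s)-1} z^{1-mT} ν(dz). -/
/-!
Write `Γ_s = R β` with `β ~ Beta(ms, m(T-s))` independent of `R = Γ_T`. Given `R = y > 0`, `R β`
has density `y⁻¹ f_β(x / y) = x^(ms-1) (y-x)^(m(T-s)-1) y^(1-mT) / B(ms, m(T-s))` on `(0, y)`, so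
`(Γ_s, Γ_T)` has a density with respect to `Lebesgue ⊗ ν`. Bayes' formula gives the conditional law
of `Γ_T` given `Γ_s = x` as this density normalised in `y`, and the factor `x^(ms-1) / B` cancels.
For `s = 0`, `Γ_s = 0` and the kernel at `0` is `ν` itself.
-/

open MeasureTheory ProbabilityTheory

noncomputable section

/-- The Beta(a, b) distribution on `(0,1)`. -/
def betaMeasure (a b : ℝ) : Measure ℝ :=
  volume.withDensity fun x =>
    ENNReal.ofReal (if 0 < x ∧ x < 1 then
      x ^ (a - 1) * (1 - x) ^ (b - 1)
        / (Real.Gamma a * Real.Gamma b / Real.Gamma (a + b)) else 0)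

open scoped ENNReal
open Set

theorem map_const_mul_withDensity {c : ℝ} (hc : 0 < c) {f : ℝ → ℝ≥0∞} (hf : Measurable f) :
    (volume.withDensity f).map (c * ·)
      = volume.withDensity fun x => ENNReal.ofReal c⁻¹ * f (c⁻¹ * x) := by
  ext S hS
  have hg : Measurable fun x => S.indicator (fun x => f (c⁻¹ * x)) x :=
    (hf.comp (measurable_const_mul _)).indicator hS
  rw [Measure.map_apply (measurable_const_mul c) hS, withDensity_apply _ hS,
    withDensity_apply _ ((measurable_const_mul c) hS),
    lintegral_const_mul' _ _ ENNReal.ofReal_ne_top, ← lintegral_indicator hS]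
  conv_rhs => rw [← Real.smul_map_volume_mul_left hc.ne']
  rw [lintegral_smul_measure, lintegral_map hg (measurable_const_mul c),
    ← lintegral_indicator ((measurable_const_mul c) hS), smul_eq_mul, ← mul_assoc, abs_of_pos hc,
    ← ENNReal.ofReal_mul (inv_nonneg.2 hc.le), inv_mul_cancel₀ hc.ne', ENNReal.ofReal_one,
    one_mul]
  refine lintegral_congr fun u => ?_
  by_cases hu : c * u ∈ S
  · simp [hu, inv_mul_cancel_left₀ hc.ne']
  · simp [hu]

theorem ProbabilityTheory.IndepFun.map_comp_eq_map_prod {Ω α β γ : Type*} [MeasurableSpace Ω]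
    [MeasurableSpace α] [MeasurableSpace β] [MeasurableSpace γ] {μ : Measure Ω}
    [IsFiniteMeasure μ] {X : Ω → α} {Y : Ω → β} (hXY : IndepFun X Y μ) (hX : AEMeasurable X μ)
    (hY : AEMeasurable Y μ) {g : α × β → γ} (hg : Measurable g) :
    μ.map (fun ω => g (X ω, Y ω)) = ((μ.map X).prod (μ.map Y)).map g := by
  rw [← (indepFun_iff_map_prod_eq_prod_map_map hX hY).1 hXY,
    AEMeasurable.map_map_of_aemeasurable hg.aemeasurable (hX.prodMk hY)]
  rfl

/-- Bayes' formula for a joint law with density `f` with respect to `μ ⊗ ν`: the conditional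
law of the second coordinate is `f x · ν` normalised, integrated against the first marginal. -/
theorem setLIntegral_setLIntegral_eq_setLIntegral_div {α β : Type*} [MeasurableSpace α]
    [MeasurableSpace β] {μ : Measure α} {ν : Measure β} [SFinite μ] [SFinite ν]
    {f : α → β → ℝ≥0∞} (hf : Measurable (Function.uncurry f))
    (hfin : ∫⁻ x, ∫⁻ y, f x y ∂ν ∂μ ≠ ∞) {A : Set α} (hA : MeasurableSet A) (B : Set β) :
    ∫⁻ y in B, ∫⁻ x in A, f x y ∂μ ∂ν
      = ∫⁻ x in A, (∫⁻ y in B, f x y ∂ν) / ∫⁻ y, f x y ∂ν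
          ∂μ.withDensity fun x => ∫⁻ y, f x y ∂ν := by
  have hG : Measurable fun x => ∫⁻ y, f x y ∂ν := hf.lintegral_prod_right'
  have hGB : Measurable fun x => ∫⁻ y in B, f x y ∂ν := hf.lintegral_prod_right'
  rw [lintegral_lintegral_swap (f := fun y x => f x y) (hf.comp measurable_swap).aemeasurable,
    setLIntegral_withDensity_eq_setLIntegral_mul _ hG (hGB.div hG : Measurable fun x => _ / _) hA]
  refine lintegral_congr_ae (ae_restrict_of_ae ?_)
  filter_upwards [ae_lt_top hG hfin] with x hx
  refine (ENNReal.mul_div_cancel' (fun h0 => ?_) (fun h => absurd h hx.ne)).symm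
  exact nonpos_iff_eq_zero.1 (h0 ▸ setLIntegral_le_lintegral B _)

theorem map_prod_mul_fst_apply_prod (ν π : Measure ℝ) [SFinite ν] [SFinite π] {A B : Set ℝ}
    (hA : MeasurableSet A) (hB : MeasurableSet B) :
    ((ν.prod π).map fun p => (p.1 * p.2, p.1)) (A ×ˢ B) = ∫⁻ y in B, π.map (y * ·) A ∂ν := by
  have hg : Measurable fun p : ℝ × ℝ => (p.1 * p.2, p.1) := by fun_prop
  rw [Measure.map_apply hg (hA.prod hB), Measure.prod_apply (hg (hA.prod hB)),
    ← lintegral_indicator hB]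
  congr with y
  by_cases hy : y ∈ B
  · rw [indicator_of_mem hy, Measure.map_apply (measurable_const_mul y) hA]
    congr 1 with u
    simp [hy]
  · rw [indicator_of_notMem hy]
    convert measure_empty (μ := π)
    ext u
    simp [hy]

theorem betaMeasure_eq_betaMeasure (a b : ℝ) :
    _root_.betaMeasure a b = ProbabilityTheory.betaMeasure a b := by
  unfold _root_.betaMeasure ProbabilityTheory.betaMeasure
  congr with x
  rw [betaPDF_eq, beta]
  congr 1
  split_ifs <;> ring

theorem Real.inv_mul_rpow_mul_one_sub_inv_mul_rpow {x y : ℝ} (hx : 0 ≤ x) (hy : 0 < y)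
    (hxy : x ≤ y) (a b : ℝ) :
    y⁻¹ * ((y⁻¹ * x) ^ (b - 1) * (1 - y⁻¹ * x) ^ (a - 1))
      = x ^ (b - 1) * ((y - x) ^ (a - 1) * y ^ (1 - (b + a))) := by
  have hsub : 1 - y⁻¹ * x = y⁻¹ * (y - x) := by field_simp
  have hpow : y ^ (1 - (b + a)) = y⁻¹ * (y ^ (b - 1))⁻¹ * (y ^ (a - 1))⁻¹ := by
    rw [← Real.rpow_neg_one, ← Real.rpow_neg hy.le, ← Real.rpow_neg hy.le, ← Real.rpow_add hy,
      ← Real.rpow_add hy]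
    ring_nf
  rw [hsub, Real.mul_rpow (inv_nonneg.2 hy.le) hx,
    Real.mul_rpow (inv_nonneg.2 hy.le) (sub_nonneg.2 hxy), Real.inv_rpow hy.le,
    Real.inv_rpow hy.le, hpow]
  ring

def scaledBetaPDF (α β y x : ℝ) : ℝ≥0∞ := ENNReal.ofReal y⁻¹ * betaPDF α β (y⁻¹ * x)

def bridgeWeight (a c x y : ℝ) : ℝ≥0∞ := ENNReal.ofReal ((y - x) ^ (a - 1) * y ^ (1 - c))

theorem measurable_scaledBetaPDF (α β : ℝ) :
    Measurable fun p : ℝ × ℝ => scaledBetaPDF α β p.2 p.1 := by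
  unfold scaledBetaPDF betaPDF
  fun_prop

theorem map_const_mul_betaMeasure {y : ℝ} (hy : 0 < y) (α β : ℝ) :
    (ProbabilityTheory.betaMeasure α β).map (y * ·) = volume.withDensity (scaledBetaPDF α β y) :=
  map_const_mul_withDensity hy (measurable_betaPDFReal α β).ennreal_ofReal

theorem scaledBetaPDF_eq_mul_indicator {b a x : ℝ} (hx : 0 < x) (y : ℝ) :
    scaledBetaPDF b a y x
      = ENNReal.ofReal (x ^ (b - 1) / beta b a)
          * (Ioi x).indicator (bridgeWeight a (b + a) x) y := by
  rcases le_or_gt y x with hyx | hxy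
  · rw [indicator_of_notMem (show y ∉ Ioi x from not_lt.2 hyx), mul_zero, scaledBetaPDF]
    rcases le_or_gt y 0 with hy | hy
    · rw [ENNReal.ofReal_of_nonpos (inv_nonpos.2 hy), zero_mul]
    · rw [betaPDF_eq_zero_of_one_le ((one_le_inv_mul₀ hy).2 hyx), mul_zero]
  · have hy : 0 < y := hx.trans hxy
    rw [indicator_of_mem (show y ∈ Ioi x from hxy), scaledBetaPDF, bridgeWeight,
      betaPDF_of_pos_lt_one (by positivity) ((inv_mul_lt_one₀ hy).2 hxy),
      ← ENNReal.ofReal_mul (inv_nonneg.2 hy.le),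
      ← ENNReal.ofReal_mul' (by have := sub_pos.2 hxy; positivity)]
    congr 1
    calc y⁻¹ * (1 / beta b a * (y⁻¹ * x) ^ (b - 1) * (1 - y⁻¹ * x) ^ (a - 1))
        = y⁻¹ * ((y⁻¹ * x) ^ (b - 1) * (1 - y⁻¹ * x) ^ (a - 1)) / beta b a := by ring
      _ = _ := by
        rw [Real.inv_mul_rpow_mul_one_sub_inv_mul_rpow hx.le hy hxy.le]
        ring

theorem setLIntegral_scaledBetaPDF (ν : Measure ℝ) {b a x : ℝ} (hx : 0 < x) (S : Set ℝ) :
    ∫⁻ y in S, scaledBetaPDF b a y x ∂ν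
      = ENNReal.ofReal (x ^ (b - 1) / beta b a)
          * ∫⁻ y in S ∩ Ioi x, bridgeWeight a (b + a) x y ∂ν := by
  simp_rw [scaledBetaPDF_eq_mul_indicator hx]
  rw [lintegral_const_mul' _ _ ENNReal.ofReal_ne_top, lintegral_indicator measurableSet_Ioi,
    Measure.restrict_restrict measurableSet_Ioi, inter_comm]

theorem map_prod_betaMeasure_mul_fst_apply_prod (ν : Measure ℝ) [IsFiniteMeasure ν]
    (hν : ν (Iic 0) = 0) {b a : ℝ} (hb : 0 < b) (ha : 0 < a) {A B : Set ℝ}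
    (hA : MeasurableSet A) (hB : MeasurableSet B) :
    ((ν.prod (ProbabilityTheory.betaMeasure b a)).map fun p => (p.1 * p.2, p.1)) (A ×ˢ B)
      = ∫⁻ x in A, (∫⁻ y in B ∩ Ioi x, bridgeWeight a (b + a) x y ∂ν)
          / ∫⁻ y in Ioi x, bridgeWeight a (b + a) x y ∂ν
          ∂(ν.prod (ProbabilityTheory.betaMeasure b a)).map fun p => p.1 * p.2 := by
  set π := ProbabilityTheory.betaMeasure b a
  have : IsProbabilityMeasure π := isProbabilityMeasureBeta hb ha
  set G : ℝ → ℝ≥0∞ := fun x => ∫⁻ y, scaledBetaPDF b a y x ∂ν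
  have hG : Measurable G := (measurable_scaledBetaPDF b a).lintegral_prod_right'
  have hpos : ∀ᵐ y ∂ν, 0 < y := by
    rw [ae_iff]
    simp only [not_lt]
    exact hν
  have hjoint : ∀ A' B' : Set ℝ, MeasurableSet A' → MeasurableSet B' →
      ((ν.prod π).map fun p => (p.1 * p.2, p.1)) (A' ×ˢ B')
        = ∫⁻ y in B', ∫⁻ x in A', scaledBetaPDF b a y x ∂volume ∂ν := by
    intro A' B' hA' hB'
    rw [map_prod_mul_fst_apply_prod ν π hA' hB']
    refine lintegral_congr_ae (ae_restrict_of_ae ?_)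
    filter_upwards [hpos] with y hy
    rw [map_const_mul_betaMeasure hy, withDensity_apply _ hA']
  have hlaw : (ν.prod π).map (fun p => p.1 * p.2) = volume.withDensity G := by
    ext A' hA'
    rw [show (fun p : ℝ × ℝ => p.1 * p.2) = Prod.fst ∘ fun p => (p.1 * p.2, p.1) from rfl,
      ← Measure.map_map measurable_fst (by fun_prop), Measure.map_apply measurable_fst hA',
      ← prod_univ, hjoint A' univ hA' .univ, Measure.restrict_univ,
      lintegral_lintegral_swap (f := fun y x => scaledBetaPDF b a y x)
        ((measurable_scaledBetaPDF b a).comp measurable_swap).aemeasurable,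
      withDensity_apply _ hA']
  have hfin : ∫⁻ x, G x ≠ ∞ := by
    rw [← setLIntegral_univ, ← withDensity_apply _ .univ, ← hlaw]
    exact measure_ne_top _ _
  rw [hjoint A B hA hB, setLIntegral_setLIntegral_eq_setLIntegral_div
    (f := fun x y => scaledBetaPDF b a y x) (measurable_scaledBetaPDF b a) hfin hA, hlaw]
  refine setLIntegral_congr_fun_ae hA ((ae_withDensity_iff hG).2 (ae_of_all _ fun x hGx _ => ?_))
  have hx : 0 < x := by
    by_contra! hx
    refine hGx ((lintegral_congr_ae ?_).trans lintegral_zero)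
    filter_upwards [hpos] with y hy
    rw [scaledBetaPDF, betaPDF_eq_zero_of_nonpos
      (mul_nonpos_of_nonneg_of_nonpos (inv_nonneg.2 hy.le) hx), mul_zero]
  have hc : ENNReal.ofReal (x ^ (b - 1) / beta b a) ≠ 0 :=
    (ENNReal.ofReal_pos.2 (div_pos (Real.rpow_pos_of_pos hx _) (beta_pos hb ha))).ne'
  have htotal := setLIntegral_scaledBetaPDF ν (b := b) (a := a) hx univ
  rw [setLIntegral_univ, univ_inter] at htotal
  rw [setLIntegral_scaledBetaPDF ν hx, htotal,
    ENNReal.mul_div_mul_left _ _ hc ENNReal.ofReal_ne_top]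

theorem bridgeWeight_zero_self {c y : ℝ} (hy : 0 < y) : bridgeWeight c c 0 y = 1 := by
  rw [bridgeWeight, sub_zero, ← Real.rpow_add hy, sub_add_sub_cancel', sub_self, Real.rpow_zero,
    ENNReal.ofReal_one]

theorem map_prod_dirac_zero_mul_fst_apply_prod (ν : Measure ℝ) [IsProbabilityMeasure ν]
    (hν : ν (Iic 0) = 0) (c : ℝ) {A B : Set ℝ} (hA : MeasurableSet A) (hB : MeasurableSet B) :
    ((ν.prod (Measure.dirac 0)).map fun p => (p.1 * p.2, p.1)) (A ×ˢ B)
      = ∫⁻ x in A, (∫⁻ y in B ∩ Ioi x, bridgeWeight c c x y ∂ν)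
          / ∫⁻ y in Ioi x, bridgeWeight c c x y ∂ν
          ∂(ν.prod (Measure.dirac 0)).map fun p => p.1 * p.2 := by
  classical
  have hlaw : (ν.prod (Measure.dirac (0 : ℝ))).map (fun p => p.1 * p.2) = Measure.dirac 0 := by
    rw [Measure.prod_dirac, Measure.map_map (by fun_prop) (by fun_prop)]
    simp [Function.comp_def]
  have hconull : ν (Ioi 0)ᶜ = 0 := by rwa [compl_Ioi]
  have hprob : ν (Ioi 0) = 1 := by
    rw [← compl_Iic, prob_compl_eq_one_iff measurableSet_Iic]
    exact hν
  have hweight : ∀ S ⊆ Ioi (0 : ℝ), MeasurableSet S →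
      ∫⁻ y in S, bridgeWeight c c 0 y ∂ν = ν S :=
    fun S hS hSm => (setLIntegral_congr_fun hSm fun y hy => bridgeWeight_zero_self (hS hy)).trans
      (setLIntegral_one S)
  rw [hlaw, setLIntegral_dirac, map_prod_mul_fst_apply_prod ν _ hA hB]
  simp only [Measure.map_dirac' (measurable_const_mul _), mul_zero]
  rw [setLIntegral_const, Measure.dirac_apply' _ hA,
    hweight _ inter_subset_right (hB.inter measurableSet_Ioi),
    hweight _ subset_rfl measurableSet_Ioi, measure_inter_conull hconull, hprob, div_one]
  by_cases h0 : (0 : ℝ) ∈ A <;> simp [h0]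

/-- Here `Γ_s = R β` and `Γ_T = R`, where `β` has the law of `γ_{sT}`: `Beta(ms, m(T-s))`, or the
point mass at `0` when `s = 0`. The conditional law is stated in the joint form
`P[Γ_s ∈ A, Γ_T ∈ B] = ∫_A κ(x)(B) P[Γ_s ∈ dx]`. -/
theorem asp_grb_terminal_transition
    {Ω : Type*} [MeasurableSpace Ω] (μ : Measure Ω) [IsProbabilityMeasure μ]
    (m s T : ℝ) (hm : 0 < m) (hs : 0 ≤ s) (hsT : s < T)
    (ν : Measure ℝ) [IsProbabilityMeasure ν] (hν : ν (Set.Iic 0) = 0)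
    (R β : Ω → ℝ)
    (hR : Measure.map R μ = ν)
    (hβ : Measure.map β μ =
      if s = 0 then Measure.dirac 0 else _root_.betaMeasure (m * s) (m * (T - s)))
    (hindep : IndepFun R β μ) :
    ∀ A B : Set ℝ, MeasurableSet A → MeasurableSet B →
      μ {ω | R ω * β ω ∈ A ∧ R ω ∈ B}
        = ∫⁻ x in A,
            (∫⁻ y in B ∩ Set.Ioi x,
                ENNReal.ofReal ((y - x) ^ (m * (T - s) - 1) * y ^ (1 - m * T)) ∂ν)
              / (∫⁻ z in Set.Ioi x,
                  ENNReal.ofReal ((z - x) ^ (m * (T - s) - 1) * z ^ (1 - m * T)) ∂ν)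
            ∂(Measure.map (fun ω => R ω * β ω) μ) := by
  intro A B hA hB
  have hb : 0 < s → 0 < m * s := mul_pos hm
  have ha : 0 < m * (T - s) := mul_pos hm (sub_pos.2 hsT)
  have hRm : AEMeasurable R μ := .of_map_ne_zero (hR ▸ IsProbabilityMeasure.ne_zero ν)
  have hβm : AEMeasurable β μ := by
    refine .of_map_ne_zero ?_
    rw [hβ]
    split_ifs with hs0
    · exact NeZero.ne _
    · rw [betaMeasure_eq_betaMeasure]
      exact (isProbabilityMeasureBeta (hb (hs.lt_of_ne' hs0)) ha).ne_zero
  have hevent : μ {ω | R ω * β ω ∈ A ∧ R ω ∈ B}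
      = μ.map (fun ω => (R ω * β ω, R ω)) (A ×ˢ B) :=
    (Measure.map_apply_of_aemeasurable ((hRm.mul hβm).prodMk hRm) (hA.prod hB)).symm
  rw [hevent, hindep.map_comp_eq_map_prod hRm hβm (g := fun p => (p.1 * p.2, p.1)) (by fun_prop),
    hindep.map_comp_eq_map_prod hRm hβm (g := fun p => p.1 * p.2) (by fun_prop), hR, hβ]
  rcases hs.eq_or_lt with rfl | hs0
  · simp only [if_pos, sub_zero]
    exact map_prod_dirac_zero_mul_fst_apply_prod ν hν (m * T) hA hB
  · rw [if_neg hs0.ne', betaMeasure_eq_betaMeasure, show m * T = m * s + m * (T - s) by ring]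
    exact map_prod_betaMeasure_mul_fst_apply_prod ν hν (hb hs0) ha hA hB

end
end

section
/- Let {ξ_t} be an n-dimensional gamma process under Q with Q[ξ_t ∈ dx] = Π_i x_i^{t-1} e^{-x_i}/Γ(t) dx_i, R_t = Σ_i ξ_t^{(i)}, and Ψ_t(x) = ∫_x^∞ f_{n(1-t)}(z - x)/f_n(z) ν(dz) where f_t(x) = x^{t-1}e^{-x}/Γ(t) and ν is a probability measure on (0,∞). Then {Ψ_t(R_t)}_{0 ≤ t < 1} is a martingale with respect to the filtration generated by {ξ_t}, with Ψ_0(R_0) = 1. -/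
/-! Work with the `ℝ≥0∞`-valued version of `Ψ`, where Tonelli needs no integrability.
Write `R_t = R_s + (R_t - R_s)`: the increment is independent of `ℱ_s` with law
`Gamma(n(t - s))`, so on each `A ∈ ℱ_s` the integral of `Ψ_t(R_t)` is that of `Ψ_t(R_s + ·)`
averaged against this law. Exchanging that average with the `ν`-integral yields the
convolution `f_{n(t-s)} * f_{n(1-t)} = f_{n(1-s)}`, i.e. `Ψ_s(R_s)`. Taking `s = 0` gives
`E Ψ_t(R_t) = Ψ_0(0) = ν(0, ∞) = 1`, hence integrability. -/

open MeasureTheory ProbabilityTheory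

noncomputable section

open Set
open scoped ENNReal

lemma measurable_gammaDens (t : ℝ) : Measurable (gammaDens t) :=
  Measurable.ite measurableSet_Ioi (by fun_prop) measurable_const

lemma gammaDens_nonneg {t : ℝ} (ht : 0 < t) (x : ℝ) : 0 ≤ gammaDens t x := by
  have := Real.Gamma_pos_of_pos ht
  unfold gammaDens
  split_ifs <;> positivity

lemma gammaDens_pos {t x : ℝ} (ht : 0 < t) (hx : 0 < x) : 0 < gammaDens t x := by
  have := Real.Gamma_pos_of_pos ht
  rw [gammaDens, if_pos hx]
  positivity

lemma gammaDens_of_nonpos {t x : ℝ} (hx : x ≤ 0) : gammaDens t x = 0 :=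
  if_neg hx.not_gt

lemma gammaMeasure_one_eq_withDensity (b : ℝ) :
    gammaMeasure b 1 = volume.withDensity fun y => ENNReal.ofReal (gammaDens b y) := by
  refine withDensity_congr_ae ?_
  filter_upwards [Measure.ae_ne volume 0] with y hy
  rcases hy.lt_or_gt with hy | hy
  · rw [gammaPDF_of_neg hy, gammaDens_of_nonpos hy.le, ENNReal.ofReal_zero]
  · rw [gammaPDF_of_nonneg hy.le, gammaDens, if_pos hy, Real.one_rpow, one_mul]
    congr 1
    ring

lemma integral_rpow_mul_sub_rpow {a b w : ℝ} (ha : 0 < a) (hb : 0 < b) (hw : 0 < w) :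
    ∫ x in 0..w, x ^ (b - 1) * (w - x) ^ (a - 1) = w ^ (b + a - 1) * beta b a := by
  have hscaled := Complex.betaIntegral_scaled b a hw
  rw [Complex.betaIntegral_eq_Gamma_mul_div _ _ (by simpa) (by simpa)] at hscaled
  apply Complex.ofReal_injective
  rw [← intervalIntegral.integral_ofReal]
  have hcongr : EqOn (fun x : ℝ => ((x ^ (b - 1) * (w - x) ^ (a - 1) : ℝ) : ℂ))
      (fun x : ℝ => (x : ℂ) ^ ((b : ℂ) - 1) * ((w : ℂ) - x) ^ ((a : ℂ) - 1)) (uIcc 0 w) := by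
    intro x hx
    rw [uIcc_of_le hw.le] at hx
    push_cast [Complex.ofReal_cpow hx.1, Complex.ofReal_cpow (sub_nonneg.2 hx.2)]
    rfl
  rw [intervalIntegral.integral_congr hcongr, hscaled, beta]
  push_cast [Complex.ofReal_cpow hw.le, ← Complex.Gamma_ofReal]
  rfl

lemma gammaDens_mul_gammaDens_sub {a b w y : ℝ} (hy : y ∈ Ioo 0 w) :
    gammaDens b y * gammaDens a (w - y)
      = Real.exp (-w) / (Real.Gamma b * Real.Gamma a) * (y ^ (b - 1) * (w - y) ^ (a - 1)) := by
  have hexp : Real.exp (-w) = Real.exp (-y) * Real.exp (-(w - y)) := by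
    rw [← Real.exp_add]
    ring_nf
  rw [gammaDens, gammaDens, if_pos hy.1, if_pos (sub_pos.2 hy.2), hexp]
  ring

lemma lintegral_gammaDens_mul_gammaDens_sub {a b : ℝ} (ha : 0 < a) (hb : 0 < b) (w : ℝ) :
    ∫⁻ y, ENNReal.ofReal (gammaDens b y * gammaDens a (w - y))
      = ENNReal.ofReal (gammaDens (a + b) w) := by
  have hsupp : Function.support
      (fun y => ENNReal.ofReal (gammaDens b y * gammaDens a (w - y))) ⊆ Ioo 0 w := by
    intro y hy
    by_contra hmem
    rcases not_and_or.1 hmem with hy0 | hyw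
    · simp [gammaDens_of_nonpos (not_lt.1 hy0)] at hy
    · simp [gammaDens_of_nonpos (sub_nonpos.2 (not_lt.1 hyw))] at hy
  rw [← setLIntegral_eq_of_support_subset hsupp]
  rcases le_or_gt w 0 with hw | hw
  · simp [Ioo_eq_empty hw.not_gt, gammaDens_of_nonpos hw]
  have hbeta := integral_rpow_mul_sub_rpow ha hb hw
  have hint : IntegrableOn (fun y => y ^ (b - 1) * (w - y) ^ (a - 1)) (Ioc 0 w) :=
    (intervalIntegral.intervalIntegrable_of_integral_ne_zero
      (by rw [hbeta]; have := beta_pos hb ha; positivity)).1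
  rw [setLIntegral_congr_fun measurableSet_Ioo fun y hy => by rw [gammaDens_mul_gammaDens_sub hy],
    ← ofReal_integral_eq_lintegral_ofReal ((hint.mono_set Ioo_subset_Ioc_self).const_mul _)
      ((ae_restrict_iff' measurableSet_Ioo).2 (ae_of_all _ fun y hy => by
        have := sub_pos.2 hy.2; have := hy.1; positivity)),
    integral_const_mul, integral_Ioc_eq_integral_Ioo.symm, ← intervalIntegral.integral_of_le hw.le,
    hbeta]
  have := Real.Gamma_pos_of_pos ha
  have := Real.Gamma_pos_of_pos hb
  rw [gammaDens, if_pos hw, beta, add_comm b a]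
  field_simp

/-- `Ψ_t(x)` for shape `c`, as an `ℝ≥0∞`-valued integral over all of `ℝ`: the integrand
vanishes for `z ≤ x`. -/
def aspDensity (c : ℝ) (ν : Measure ℝ) (t x : ℝ) : ℝ≥0∞ :=
  ∫⁻ z, ENNReal.ofReal (gammaDens (c * (1 - t)) (z - x) / gammaDens c z) ∂ν

lemma measurable_aspDensity (c : ℝ) (ν : Measure ℝ) [SFinite ν] (t : ℝ) :
    Measurable (aspDensity c ν t) :=
  Measurable.lintegral_prod_right' <| Measurable.ennreal_ofReal <|
    ((measurable_gammaDens _).comp (measurable_snd.sub measurable_fst)).div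
      ((measurable_gammaDens _).comp measurable_snd)

lemma setIntegral_Ioi_eq_toReal_aspDensity {c t : ℝ} (hc : 0 < c) (ht : t < 1)
    (ν : Measure ℝ) (x : ℝ) :
    ∫ z in Ioi x, gammaDens (c * (1 - t)) (z - x) / gammaDens c z ∂ν
      = (aspDensity c ν t x).toReal := by
  have hsupp : Function.support
      (fun z => ENNReal.ofReal (gammaDens (c * (1 - t)) (z - x) / gammaDens c z)) ⊆ Ioi x :=
    fun z hz => by_contra fun hzx => hz <| by
      simp [gammaDens_of_nonpos (sub_nonpos.2 (not_lt.1 hzx))]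
  rw [aspDensity, ← setLIntegral_eq_of_support_subset hsupp,
    integral_eq_lintegral_of_nonneg_ae]
  · exact ae_of_all _ fun z =>
      div_nonneg (gammaDens_nonneg (mul_pos hc (sub_pos.2 ht)) _) (gammaDens_nonneg hc _)
  · exact (((measurable_gammaDens _).comp (measurable_id.sub_const x)).div
      (measurable_gammaDens _)).aestronglyMeasurable

lemma aspDensity_zero_zero {c : ℝ} (hc : 0 < c) (ν : Measure ℝ) [IsProbabilityMeasure ν]
    (hν : ν (Iic 0) = 0) : aspDensity c ν 0 0 = 1 := by
  rw [← (prob_compl_eq_one_iff measurableSet_Iic).2 hν, compl_Iic,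
    ← lintegral_indicator_one measurableSet_Ioi, aspDensity]
  refine lintegral_congr fun z => ?_
  rcases le_or_gt z 0 with hz | hz
  · simp [gammaDens_of_nonpos hz, hz.not_gt]
  · simp [hz, (gammaDens_pos hc hz).ne']

lemma lintegral_aspDensity_add_gammaMeasure {c s t : ℝ} (hc : 0 < c) (hst : s < t) (ht : t < 1)
    (ν : Measure ℝ) [SFinite ν] (x : ℝ) :
    ∫⁻ y, aspDensity c ν t (x + y) ∂gammaMeasure (c * (t - s)) 1 = aspDensity c ν s x := by
  have ha : 0 < c * (1 - t) := mul_pos hc (sub_pos.2 ht)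
  have hb : 0 < c * (t - s) := mul_pos hc (sub_pos.2 hst)
  have hmeas : Measurable (Function.uncurry fun y z : ℝ =>
      ENNReal.ofReal (gammaDens (c * (t - s)) y)
        * ENNReal.ofReal (gammaDens (c * (1 - t)) (z - (x + y)) / gammaDens c z)) :=
    ((measurable_gammaDens _).comp measurable_fst).ennreal_ofReal.mul <|
      (((measurable_gammaDens _).comp (measurable_snd.sub (measurable_fst.const_add x))).div
        ((measurable_gammaDens _).comp measurable_snd)).ennreal_ofReal
  have hshift : Measurable fun y => aspDensity c ν t (x + y) :=
    (measurable_aspDensity c ν t).comp (measurable_const_add x)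
  calc ∫⁻ y, aspDensity c ν t (x + y) ∂gammaMeasure (c * (t - s)) 1
      = ∫⁻ y, ∫⁻ z, ENNReal.ofReal (gammaDens (c * (t - s)) y)
          * ENNReal.ofReal (gammaDens (c * (1 - t)) (z - (x + y)) / gammaDens c z) ∂ν := by
        rw [gammaMeasure_one_eq_withDensity, lintegral_withDensity_eq_lintegral_mul _
          (measurable_gammaDens _).ennreal_ofReal hshift]
        refine lintegral_congr fun y => ?_
        rw [Pi.mul_apply, aspDensity, ← lintegral_const_mul' _ _ ENNReal.ofReal_ne_top]
    _ = ∫⁻ z, (∫⁻ y, ENNReal.ofReal (gammaDens (c * (t - s)) y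
          * gammaDens (c * (1 - t)) (z - x - y))) * ENNReal.ofReal (gammaDens c z)⁻¹ ∂ν := by
        rw [lintegral_lintegral_swap hmeas.aemeasurable]
        refine lintegral_congr fun z => ?_
        rw [← lintegral_mul_const' _ _ ENNReal.ofReal_ne_top]
        refine lintegral_congr fun y => ?_
        rw [← ENNReal.ofReal_mul (gammaDens_nonneg hb y), ← ENNReal.ofReal_mul
          (mul_nonneg (gammaDens_nonneg hb y) (gammaDens_nonneg ha _)), sub_add_eq_sub_sub,
          div_eq_mul_inv, mul_assoc]
    _ = aspDensity c ν s x := by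
        refine lintegral_congr fun z => ?_
        rw [lintegral_gammaDens_mul_gammaDens_sub ha hb, ← ENNReal.ofReal_mul
          (gammaDens_nonneg (add_pos ha hb) _), ← div_eq_mul_inv]
        congr 3
        ring

section Independence

variable {Ω α β : Type*} {m mΩ : MeasurableSpace Ω} {mα : MeasurableSpace α}
  {mβ : MeasurableSpace β} {μ : Measure Ω} [IsFiniteMeasure μ]

lemma map_restrict_prodMk_eq_prod_of_indep {X : Ω → α} {Y : Ω → β} (hm : m ≤ mΩ)
    (hX : Measurable[m] X) (hY : Measurable Y) (hindep : Indep m (mβ.comap Y) μ)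
    {A : Set Ω} (hA : MeasurableSet[m] A) :
    (μ.restrict A).map (fun ω => (X ω, Y ω)) = ((μ.restrict A).map X).prod (μ.map Y) := by
  have hX' : Measurable X := hX.mono hm le_rfl
  refine (Measure.prod_eq fun s t hs ht => ?_).symm
  rw [Measure.map_apply (hX'.prodMk hY) (hs.prod ht), Measure.map_apply hX' hs,
    Measure.map_apply hY ht, Measure.restrict_apply (hX' hs), Measure.restrict_apply
      ((hX'.prodMk hY) (hs.prod ht)), mk_preimage_prod, inter_assoc, inter_comm (Y ⁻¹' t),
    ← inter_assoc]
  exact (Indep_iff _ _ μ).1 hindep _ _ ((hX hs).inter hA) ⟨t, ht, rfl⟩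

lemma setLIntegral_comp_add_of_indep [Add α] [MeasurableAdd₂ α] {X Y : Ω → α} (hm : m ≤ mΩ)
    (hX : Measurable[m] X) (hY : Measurable Y) (hindep : Indep m (mα.comap Y) μ)
    {f g : α → ℝ≥0∞} (hf : Measurable f) (hfg : ∀ x, ∫⁻ y, f (x + y) ∂(μ.map Y) = g x)
    {A : Set Ω} (hA : MeasurableSet[m] A) :
    ∫⁻ ω in A, f (X ω + Y ω) ∂μ = ∫⁻ ω in A, g (X ω) ∂μ := by
  have hX' : Measurable X := hX.mono hm le_rfl
  have hf' : Measurable fun p : α × α => f (p.1 + p.2) := hf.comp measurable_add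
  rw [← lintegral_map hf' (hX'.prodMk hY), map_restrict_prodMk_eq_prod_of_indep hm hX hY hindep hA,
    lintegral_prod _ hf'.aemeasurable, lintegral_map hf'.lintegral_prod_right' hX']
  simp_rw [hfg]

end Independence

lemma condExp_toReal_ae_eq_of_forall_setLIntegral_eq {Ω : Type*} {m mΩ : MeasurableSpace Ω}
    {μ : Measure Ω} (hm : m ≤ mΩ) [SigmaFinite (μ.trim hm)] {f g : Ω → ℝ≥0∞}
    (hf : Measurable f) (hg : Measurable[m] g) (hfin : ∫⁻ ω, f ω ∂μ ≠ ∞)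
    (hfg : ∀ A, MeasurableSet[m] A → ∫⁻ ω in A, f ω ∂μ = ∫⁻ ω in A, g ω ∂μ) :
    μ[fun ω => (f ω).toReal | m] =ᵐ[μ] fun ω => (g ω).toReal := by
  have hg' : Measurable g := hg.mono hm le_rfl
  have hgfin : ∫⁻ ω, g ω ∂μ ≠ ∞ := by
    rwa [← setLIntegral_univ, ← hfg univ MeasurableSet.univ, setLIntegral_univ]
  refine (ae_eq_condExp_of_forall_setIntegral_eq hm
    (integrable_toReal_of_lintegral_ne_top hf.aemeasurable hfin)
    (fun A _ _ => (integrable_toReal_of_lintegral_ne_top hg'.aemeasurable hgfin).integrableOn)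
    (fun A hA _ => ?_) hg.ennreal_toReal.aestronglyMeasurable).symm
  rw [integral_toReal hg'.aemeasurable.restrict (ae_restrict_of_ae (ae_lt_top hg' hgfin)),
    integral_toReal hf.aemeasurable.restrict (ae_restrict_of_ae (ae_lt_top hf hfin)), hfg A hA]

lemma measurable_of_filtration_eq_iSup_comap {Ω E : Type*} {mΩ : MeasurableSpace Ω}
    [MeasurableSpace E] {ξ : ℝ → Ω → E} {ℱ : Filtration ℝ mΩ}
    (hℱ : ∀ t : ℝ, (ℱ t : MeasurableSpace Ω)
      = ⨆ s ∈ Icc (0 : ℝ) t, MeasurableSpace.comap (ξ s) inferInstance)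
    {t : ℝ} (ht : 0 ≤ t) : Measurable[ℱ t] (ξ t) := by
  rw [measurable_iff_comap_le, hℱ t]
  exact le_iSup₂ (f := fun s (_ : s ∈ Icc (0 : ℝ) t) => MeasurableSpace.comap (ξ s) inferInstance)
    t ⟨ht, le_rfl⟩

/-- For an `n`-dimensional gamma process `ξ` under `Q` (independent standard gamma
components, so that `R_t = ∑ i, ξ_t^{(i)}` is a gamma process with shape `nt`), and
`Ψ_t(x) = ∫_x^∞ f_{n(1-t)}(z-x)/f_n(z) ν(dz)`, the process `{Ψ_t(R_t)}_{0≤t<1}` is a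
martingale with respect to the filtration generated by `ξ`, with `Ψ_0(R_0) = Ψ_0(0) = 1`. -/
theorem asp_density_process_martingale
    {Ω : Type*} {mΩ : MeasurableSpace Ω} (μ : Measure Ω) [IsProbabilityMeasure μ]
    (n : ℕ) (hn : 2 ≤ n)
    (ν : Measure ℝ) [IsProbabilityMeasure ν] (hν : ν (Set.Iic 0) = 0)
    (ξ : ℝ → Ω → Fin n → ℝ) (ℱ : Filtration ℝ mΩ)
    (hℱ : ∀ t : ℝ, (ℱ t : MeasurableSpace Ω)
      = ⨆ s ∈ Set.Icc (0 : ℝ) t, MeasurableSpace.comap (ξ s) inferInstance)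
    (hstart : ∀ᵐ ω ∂μ, ξ 0 ω = 0)
    (hlaw : ∀ s t : ℝ, 0 ≤ s → s < t →
      Measure.map (fun ω => ∑ i, ξ t ω i - ∑ i, ξ s ω i) μ
        = gammaMeasure ((n : ℝ) * (t - s)) 1)
    (hindep : ∀ s t : ℝ, 0 ≤ s → s < t →
      Indep (ℱ s) (MeasurableSpace.comap (fun ω => ∑ i, ξ t ω i - ∑ i, ξ s ω i)
        inferInstance) μ)
    (Ψ : ℝ → ℝ → ℝ)
    (hΨ : ∀ t x : ℝ, Ψ t x
      = ∫ z in Set.Ioi x, gammaDens ((n : ℝ) * (1 - t)) (z - x) / gammaDens n z ∂ν) :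
    (∀ s t : ℝ, 0 ≤ s → s ≤ t → t < 1 →
      μ[(fun ω => Ψ t (∑ i, ξ t ω i)) | ℱ s] =ᵐ[μ] fun ω => Ψ s (∑ i, ξ s ω i)) ∧
    Ψ 0 0 = 1 := by
  have hn0 : (0 : ℝ) < n := by exact_mod_cast (by omega : 0 < n)
  set R : ℝ → Ω → ℝ := fun t ω => ∑ i, ξ t ω i with hR
  have hR_adapted : ∀ t, 0 ≤ t → Measurable[ℱ t] (R t) := fun t ht =>
    Finset.measurable_sum _ fun i _ =>
      (measurable_pi_apply i).comp (measurable_of_filtration_eq_iSup_comap hℱ ht)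
  have hR_meas : ∀ t, 0 ≤ t → Measurable (R t) := fun t ht =>
    (hR_adapted t ht).mono (ℱ.le t) le_rfl
  have hΨ_eq : ∀ t < 1, ∀ x, Ψ t x = (aspDensity n ν t x).toReal := fun t ht x => by
    rw [hΨ, setIntegral_Ioi_eq_toReal_aspDensity hn0 ht]
  have hstep : ∀ s t, 0 ≤ s → s ≤ t → t < 1 → ∀ A, MeasurableSet[ℱ s] A →
      ∫⁻ ω in A, aspDensity n ν t (R t ω) ∂μ = ∫⁻ ω in A, aspDensity n ν s (R s ω) ∂μ := by
    intro s t hs hst ht A hA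
    rcases hst.eq_or_lt with rfl | hst
    · rfl
    have hY : μ.map (fun ω => R t ω - R s ω) = gammaMeasure (n * (t - s)) 1 := hlaw s t hs hst
    simpa only [Pi.sub_apply, add_sub_cancel] using
      setLIntegral_comp_add_of_indep (ℱ.le s) (hR_adapted s hs)
        ((hR_meas t (hs.trans hst.le)).sub (hR_meas s hs)) (hindep s t hs hst)
        (measurable_aspDensity _ _ t)
        (fun x => hY ▸ lintegral_aspDensity_add_gammaMeasure hn0 hst ht ν x) hA
  have hmass : ∀ t, 0 ≤ t → t < 1 → ∫⁻ ω, aspDensity n ν t (R t ω) ∂μ = 1 := by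
    intro t ht0 ht1
    rw [← setLIntegral_univ, hstep 0 t le_rfl ht0 ht1 _ MeasurableSet.univ, setLIntegral_univ,
      lintegral_congr_ae (g := fun _ => aspDensity n ν 0 0) (hstart.mono fun ω hω => by
        simp [hR, hω]), lintegral_const, aspDensity_zero_zero hn0 ν hν, measure_univ, one_mul]
  refine ⟨fun s t hs hst ht => ?_, by
    rw [hΨ_eq 0 one_pos, aspDensity_zero_zero hn0 ν hν, ENNReal.toReal_one]⟩
  simp_rw [hΨ_eq t ht, hΨ_eq s (hst.trans_lt ht)]
  exact condExp_toReal_ae_eq_of_forall_setLIntegral_eq (ℱ.le s)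
    ((measurable_aspDensity _ _ t).comp (hR_meas t (hs.trans hst)))
    ((measurable_aspDensity _ _ s).comp (hR_adapted s hs))
    (by rw [hmass t (hs.trans hst) ht]; exact ENNReal.one_ne_top) (hstep s t hs hst ht)

end
end
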